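/- arXiv:1805.09880 — 4 statements merged into one kernel-verified Lean document; each statement's English description precedes it below -/
import Mathlib

section
/- Let (M,w0) be a single-pointed S5 epistemic model over a single agent a, and let (E,e0) be a single-pointed S5 event model over the single agent a whose postconditions are all empty, such that M,w0 ⊨ pre(e0). Let W' be the set of worlds of M that are a-accessible from w0, let E' be the set of events of E that are a-accessible from e0, and let W'' = { w ∈ W' : M,w ⊨ pre(e) for at least one e ∈ E' }. Then the pointed model (M⊗E, (w0,e0)) is bisimilar to (M', w0), where M' is the submodel of M induced by W''. -/
namespace DELMC

inductive DForm (Agent : Type) : Type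
  | atom : ℕ → DForm Agent
  | neg : DForm Agent → DForm Agent
  | and : DForm Agent → DForm Agent → DForm Agent
  | K : Agent → DForm Agent → DForm Agent
  | upd : (k : ℕ) → (Agent → Fin (k+1) → Fin (k+1) → Bool) →
      (Fin (k+1) → DForm Agent) → (Fin (k+1) → List (ℕ × Bool)) →
      (Fin (k+1) → Bool) → DForm Agent → DForm Agent

structure EpiModel (Agent : Type) where
  World : Type
  rel : Agent → World → World → Prop
  val : World → ℕ → Prop

def postEval (l : List (ℕ × Bool)) (p : ℕ) : Option Bool :=
  (l.find? (fun q => q.1 == p)).map Prod.snd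

def updModel {Agent : Type} (M : EpiModel Agent) (k : ℕ)
    (S : Agent → Fin (k+1) → Fin (k+1) → Bool)
    (dom : M.World → Fin (k+1) → Prop)
    (post : Fin (k+1) → List (ℕ × Bool)) : EpiModel Agent where
  World := { p : M.World × Fin (k+1) // dom p.1 p.2 }
  rel a u v := M.rel a u.1.1 v.1.1 ∧ S a u.1.2 v.1.2 = true
  val u p :=
    match postEval (post u.1.2) p with
    | some b => b = true
    | none => M.val u.1.1 p

def Sat {Agent : Type} : (M : EpiModel Agent) → M.World → DForm Agent → Prop
  | M, w, .atom p => M.val w p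
  | M, w, .neg φ => ¬ Sat M w φ
  | M, w, .and φ ψ => Sat M w φ ∧ Sat M w ψ
  | M, w, .K a φ => ∀ v, M.rel a w v → Sat M v φ
  | M, w, .upd k S pre post des φ =>
      ∀ e, des e = true → ∀ h : Sat M w (pre e),
        Sat (updModel M k S (fun v e' => Sat M v (pre e')) post) ⟨(w, e), h⟩ φ

/-- `K̂_a φ := ¬ K_a ¬ φ`. -/
def khat {Agent : Type} (a : Agent) (φ : DForm Agent) : DForm Agent := .neg (.K a (.neg φ))

/-- The formula `⊤` (as the abbreviation `¬(p ∧ ¬p)`). -/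
def dtop {Agent : Type} : DForm Agent := .neg (.and (.atom 0) (.neg (.atom 0)))

/-- Implication `φ → ψ`, as the abbreviation `¬(φ ∧ ¬ψ)`. -/
def dimp {Agent : Type} (φ ψ : DForm Agent) : DForm Agent := .neg (.and φ (.neg ψ))

/-- Conjunction of a list of formulas. -/
def bigAnd {Agent : Type} : List (DForm Agent) → DForm Agent
  | [] => dtop
  | [φ] => φ
  | φ :: rest => .and φ (bigAnd rest)

/-- An epistemic model is S5 if all relations are equivalence relations. -/
def EpiModel.IsS5 {Agent : Type} (M : EpiModel Agent) : Prop := ∀ a, Equivalence (M.rel a)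

/-- A list of literals contains no complementary pair. -/
def NoComplPair (l : List (ℕ × Bool)) : Prop := ∀ p : ℕ, ¬ ((p, true) ∈ l ∧ (p, false) ∈ l)

/-- All update modalities in the formula use S5 event models (with no constraint on
designated events or postconditions beyond non-complementarity). -/
def DForm.updsS5 {Agent : Type} : DForm Agent → Prop
  | .atom _ => True
  | .neg φ => φ.updsS5
  | .and φ ψ => φ.updsS5 ∧ ψ.updsS5
  | .K _ φ => φ.updsS5
  | .upd _ S pre post _ φ =>
      (∀ a, Equivalence (fun i j => S a i j = true)) ∧
      (∀ e, NoComplPair (post e)) ∧ (∀ e, (pre e).updsS5) ∧ φ.updsS5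

/-- All update modalities are single-pointed (exactly one designated event). -/
def DForm.updsSingle {Agent : Type} : DForm Agent → Prop
  | .atom _ => True
  | .neg φ => φ.updsSingle
  | .and φ ψ => φ.updsSingle ∧ ψ.updsSingle
  | .K _ φ => φ.updsSingle
  | .upd _ _ pre _ des φ =>
      (∃! e, des e = true) ∧ (∀ e, (pre e).updsSingle) ∧ φ.updsSingle

/-- All update modalities have empty postconditions. -/
def DForm.updsNoPost {Agent : Type} : DForm Agent → Prop
  | .atom _ => True
  | .neg φ => φ.updsNoPost
  | .and φ ψ => φ.updsNoPost ∧ ψ.updsNoPost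
  | .K _ φ => φ.updsNoPost
  | .upd _ _ pre post _ φ =>
      (∀ e, post e = []) ∧ (∀ e, (pre e).updsNoPost) ∧ φ.updsNoPost

/-- The formula contains no update modalities (it is a formula of basic epistemic logic). -/
def DForm.noUpd {Agent : Type} : DForm Agent → Prop
  | .atom _ => True
  | .neg φ => φ.noUpd
  | .and φ ψ => φ.noUpd ∧ ψ.noUpd
  | .K _ φ => φ.noUpd
  | .upd _ _ _ _ _ _ => False

/-- All propositional variables occurring in the formula belong to `s`. -/
def DForm.atomsSub {Agent : Type} (s : Set ℕ) : DForm Agent → Prop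
  | .atom p => p ∈ s
  | .neg φ => φ.atomsSub s
  | .and φ ψ => φ.atomsSub s ∧ ψ.atomsSub s
  | .K _ φ => φ.atomsSub s
  | .upd _ _ pre post _ φ =>
      (∀ e, (pre e).atomsSub s) ∧ (∀ e q, q ∈ post e → q.1 ∈ s) ∧ φ.atomsSub s

/-- Event models (with events `Fin (k+1)`, hence finite and nonempty). -/
structure EvtModel (Agent : Type) where
  k : ℕ
  S : Agent → Fin (k+1) → Fin (k+1) → Bool
  pre : Fin (k+1) → DForm Agent
  post : Fin (k+1) → List (ℕ × Bool)

def EvtModel.IsS5 {Agent : Type} (E : EvtModel Agent) : Prop :=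
  ∀ a, Equivalence (fun i j => E.S a i j = true)

def EvtModel.NoPost {Agent : Type} (E : EvtModel Agent) : Prop := ∀ e, E.post e = []

/-- The product update `M ⊗ E` of an epistemic model with an event model. -/
def EpiModel.update {Agent : Type} (M : EpiModel Agent) (E : EvtModel Agent) : EpiModel Agent :=
  updModel M E.k E.S (fun w e => Sat M w (E.pre e)) E.post

/-- The single-pointed update modality `[E, d]φ` as a formula. -/
def updSingle {Agent : Type} (E : EvtModel Agent) (d : Fin (E.k+1)) (φ : DForm Agent) :
    DForm Agent :=
  .upd E.k E.S E.pre E.post (fun e => decide (e = d)) φ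

/-- The multi-pointed update modality `[E, E_d]φ` with all events designated. -/
def updAll {Agent : Type} (E : EvtModel Agent) (φ : DForm Agent) : DForm Agent :=
  .upd E.k E.S E.pre E.post (fun _ => true) φ

/-- The submodel of `M` induced by the set `U` of worlds. -/
def EpiModel.restrict {Agent : Type} (M : EpiModel Agent) (U : M.World → Prop) :
    EpiModel Agent where
  World := {w : M.World // U w}
  rel a u v := M.rel a u.1 v.1
  val u p := M.val u.1 p

/-- `Z` is a bisimulation between the models `M` and `N`. -/
def IsBisim {Agent : Type} (M N : EpiModel Agent) (Z : M.World → N.World → Prop) : Prop :=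
  ∀ u u', Z u u' →
    (∀ p, M.val u p ↔ N.val u' p) ∧
    (∀ a v, M.rel a u v → ∃ v', N.rel a u' v' ∧ Z v v') ∧
    (∀ a v', N.rel a u' v' → ∃ v, M.rel a u v ∧ Z v v')

/-- The pointed models `(M, w)` and `(N, v)` are bisimilar. -/
def Bisimilar {Agent : Type} (M : EpiModel Agent) (w : M.World)
    (N : EpiModel Agent) (v : N.World) : Prop :=
  ∃ Z, IsBisim M N Z ∧ Z w v

/-- Quantifier-free propositional formulas. -/
inductive PropForm : Type
  | atom : ℕ → PropForm
  | neg : PropForm → PropForm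
  | and : PropForm → PropForm → PropForm

def PropForm.eval (α : ℕ → Bool) : PropForm → Bool
  | .atom p => α p
  | .neg φ => !(φ.eval α)
  | .and φ ψ => φ.eval α && ψ.eval α

def PropForm.atomsSub (s : Set ℕ) : PropForm → Prop
  | .atom p => p ∈ s
  | .neg φ => φ.atomsSub s
  | .and φ ψ => φ.atomsSub s ∧ ψ.atomsSub s

/-- `β` is lexicographically larger than `α` w.r.t. the ordering `x_1 ≺ … ≺ x_n`
(variable `x_i` is the propositional variable `i`). -/
def LexGT (n : ℕ) (β α : ℕ → Bool) : Prop :=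
  ∃ i, 1 ≤ i ∧ i ≤ n ∧ β i = true ∧ α i = false ∧ ∀ j, 1 ≤ j → j < i → β j = α j

/-- `α` is the lexicographically maximal assignment satisfying `ψ` (w.r.t. `x_1 ≺ … ≺ x_n`). -/
def IsLexMaxSat (n : ℕ) (ψ : PropForm) (α : ℕ → Bool) : Prop :=
  ψ.eval α = true ∧ ∀ β, ψ.eval β = true → ¬ LexGT n β α

/-- Truth of the partially quantified Boolean formula `Q_i x_i … Q_n x_n. ψ` under an
assignment, where `Q_j = ∃` for odd `j` and `Q_j = ∀` for even `j`; the first argument is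
the number of remaining quantifiers (i.e. `n + 1 - i`), the second is the index `i`. -/
def QBFAux (ψ : PropForm) : ℕ → ℕ → (ℕ → Bool) → Prop
  | 0, _, α => ψ.eval α = true
  | m+1, i, α =>
    if i % 2 = 1 then ∃ b, QBFAux ψ m (i+1) (Function.update α i b)
    else ∀ b, QBFAux ψ m (i+1) (Function.update α i b)

/-- Truth of the quantified Boolean formula `∃x_1 ∀x_2 … Q_n x_n. ψ`. -/
def QBFTrue (n : ℕ) (ψ : PropForm) : Prop := QBFAux ψ n 1 (fun _ => false)

/-- Concrete finite epistemic models, suitable as inputs of algorithms. -/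
structure FinModel (Agent : Type) where
  m : ℕ
  rel : Agent → Fin (m+1) → Fin (m+1) → Bool
  val : Fin (m+1) → List ℕ

def FinModel.toEpi {Agent : Type} (M : FinModel Agent) : EpiModel Agent where
  World := Fin (M.m+1)
  rel a u v := M.rel a u v = true
  val w p := p ∈ M.val w

def FinModel.IsS5 {Agent : Type} (M : FinModel Agent) : Prop :=
  ∀ a, Equivalence (fun u v => M.rel a u v = true)

/-! ### The Δ₂ᵖ-hardness construction (single agent, postconditions).
Variable `z` is the propositional variable `0`; variable `x_i` is `i`. -/

/-- The embedding of propositional formulas into the (dynamic) epistemic language. -/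
def PropForm.toDForm {Agent : Type} : PropForm → DForm Agent
  | .atom p => .atom p
  | .neg φ => .neg φ.toDForm
  | .and φ ψ => .and φ.toDForm ψ.toDForm

/-- The initial model of the Δ₂ᵖ-hardness construction: worlds `w₀ = 0` (making exactly `z`
true) and `w₁ = 1` (making everything false), fully `a`-related. -/
def deltaM : EpiModel Unit where
  World := Fin 2
  rel _ _ _ := True
  val w p := w = 0 ∧ p = 0

def deltaW0 : deltaM.World := (0 : Fin 2)

/-- The event model `(E_i, e_i)`: three mutually related events; designated event `0` with
precondition `z`; event `1` with precondition `¬z` and postcondition `{x_i}`; event `2`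
with precondition `¬z` and empty postcondition. -/
def deltaE (i : ℕ) : EvtModel Unit where
  k := 2
  S _ _ _ := true
  pre e := if e = 0 then .atom 0 else .neg (.atom 0)
  post e := if e = 1 then [(i, true)] else []

/-- The event model `(E'_i, e'_i)`: designated event `0` with precondition `z`; event `1`
with precondition `¬z ∧ K̂_a(x_i ∧ φ)` and postcondition `{x_i}`; event `2` with
precondition `¬z ∧ ¬K̂_a(x_i ∧ φ)` and postcondition `{¬x_i}`. -/
def deltaE' (i : ℕ) (ψ : PropForm) : EvtModel Unit where
  k := 2
  S _ _ _ := true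
  pre e :=
    if e = 0 then .atom 0
    else if e = 1 then .and (.neg (.atom 0)) (khat () (.and (.atom i) ψ.toDForm))
    else .and (.neg (.atom 0)) (.neg (khat () (.and (.atom i) ψ.toDForm)))
  post e := if e = 1 then [(i, true)] else if e = 2 then [(i, false)] else []

/-- The formula `χ = [E_1,e_1]…[E_n,e_n][E'_1,e'_1]…[E'_n,e'_n] K̂_a x_n`. -/
def deltaChi (n : ℕ) (ψ : PropForm) : DForm Unit :=
  ((List.range n).map (fun j => deltaE (j+1))).foldr (fun E acc => updSingle E 0 acc)
    (((List.range n).map (fun j => deltaE' (j+1) ψ)).foldr (fun E acc => updSingle E 0 acc)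
      (khat () (.atom n)))

/-- The model `M' = M ⊗ E_1 ⊗ … ⊗ E_n`. -/
def deltaM' (n : ℕ) : EpiModel Unit :=
  (((List.range n).map (fun j => deltaE (j+1))).foldl EpiModel.update deltaM)

/-- The model `M'' = M ⊗ E_1 ⊗ … ⊗ E_n ⊗ E'_1 ⊗ … ⊗ E'_n`. -/
def deltaM'' (n : ℕ) (ψ : PropForm) : EpiModel Unit :=
  (((List.range n).map (fun j => deltaE' (j+1) ψ)).foldl EpiModel.update (deltaM' n))

/-! ### The single-agent multi-pointed PSPACE-hardness construction.
Variable `x_i` is the propositional variable `i`. -/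

/-- The group of worlds corresponding to a truth assignment `α`: a world `none` making
no variable true and, for each `j` with `α x_j = 1`, a world `some j` making exactly `x_j`
true; all worlds mutually `a`-related. -/
def groupModel1 (n : ℕ) (α : ℕ → Bool) : EpiModel Unit where
  World := {o : Option (Fin n) // ∀ j : Fin n, o = some j → α (j.1+1) = true}
  rel _ _ _ := True
  val w p := ∃ j : Fin n, w.1 = some j ∧ p = j.1 + 1

/-- The designated world of the group of worlds corresponding to `α`. -/
def groupW0 (n : ℕ) (α : ℕ → Bool) : (groupModel1 n α).World :=
  ⟨none, fun _ h => nomatch h⟩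

/-- The multi-pointed event model `(E_i, E_i)`: two events, both designated, with
preconditions `⊤` and `¬x_i`, empty postconditions, and only reflexive relations. -/
def qEvt (i : ℕ) : EvtModel Unit where
  k := 1
  S _ e f := decide (e = f)
  pre e := if e = 0 then dtop else .neg (.atom i)
  post _ := []

/-- `χ'`: the result of replacing every variable `x_i` in `ψ` by `K̂_a x_i`. -/
def propKhat : PropForm → DForm Unit
  | .atom p => khat () (.atom p)
  | .neg φ => .neg (propKhat φ)
  | .and φ ψ => .and (propKhat φ) (propKhat ψ)

/-- `qChiAux ψ' m i` is the formula `⟨E_i,E_i⟩[E_{i+1},E_{i+1}]…ψ'` (`m` operators,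
diamond at odd indices, box at even indices). -/
def qChiAux (ψ' : DForm Unit) : ℕ → ℕ → DForm Unit
  | 0, _ => ψ'
  | m+1, i =>
    if i % 2 = 1 then .neg (updAll (qEvt i) (.neg (qChiAux ψ' m (i+1))))
    else updAll (qEvt i) (qChiAux ψ' m (i+1))

/-- The formula `χ = ⟨E_1,E_1⟩[E_2,E_2]…⟨E_{n-1},E_{n-1}⟩[E_n,E_n]χ'`. -/
def qChi (n : ℕ) (ψ : PropForm) : DForm Unit := qChiAux (propKhat ψ) n 1

/-! ### The two-agent PSPACE-hardness construction.
Agents: `a = 0`, `b = 1` (of type `Fin 2`). Propositional variables: `z_0 = 0`,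
`z_1 = 1`, `z_2 = 2`. Variable `x_j` of the QBF corresponds to the z1-chain of length `j`. -/

/-- The underlying worlds of a group of worlds, possibly together with z2-chains:
the central world, the worlds `z1 j k` (position `k` in the z1-chain of length `j+1`,
which represents the variable `x_{j+1}`), and the worlds `z2 i k` (position `k` in the
z2-chain of length `i+1`). -/
inductive GWBase (n m : ℕ) : Type
  | central : GWBase n m
  | z1 : (j : Fin n) → Fin (j.1+2) → GWBase n m
  | z2 : (i : Fin m) → Fin (i.1+2) → GWBase n m

/-- Membership in the `a`-clique: the central world and the first worlds of z1-chains. -/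
def aClique {n m : ℕ} : GWBase n m → Prop
  | .central => True
  | .z1 _ k => k.1 = 0
  | .z2 _ _ => False

/-- Membership in the `b`-clique: the central world and the first worlds of z2-chains. -/
def bClique {n m : ℕ} : GWBase n m → Prop
  | .central => True
  | .z1 _ _ => False
  | .z2 _ k => k.1 = 0

/-- Chain edges: consecutive positions of a z1-chain are related alternately by
`b`, `a`, `b`, … (starting with `b`), and those of a z2-chain alternately by
`a`, `b`, `a`, … (starting with `a`). -/
def chainEdge {n m : ℕ} (ag : Fin 2) : GWBase n m → GWBase n m → Prop
  | .z1 j k, .z1 j' k' =>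
      j.1 = j'.1 ∧ ((k'.1 = k.1 + 1 ∧ ag = (if k.1 % 2 = 0 then 1 else 0)) ∨
        (k.1 = k'.1 + 1 ∧ ag = (if k'.1 % 2 = 0 then 1 else 0)))
  | .z2 i k, .z2 i' k' =>
      i.1 = i'.1 ∧ ((k'.1 = k.1 + 1 ∧ ag = (if k.1 % 2 = 0 then 0 else 1)) ∨
        (k.1 = k'.1 + 1 ∧ ag = (if k'.1 % 2 = 0 then 0 else 1)))
  | _, _ => False

/-- The accessibility relations on `GWBase n m`. -/
def gwRel {n m : ℕ} (ag : Fin 2) (u v : GWBase n m) : Prop :=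
  u = v ∨ (ag = 0 ∧ aClique u ∧ aClique v) ∨ (ag = 1 ∧ bClique u ∧ bClique v) ∨
    chainEdge ag u v

/-- The valuation on `GWBase n m`: the central world makes exactly `z_1` and `z_2` true,
the first world of a chain makes exactly `z_1` (resp. `z_2`) true, the last world of a
chain makes exactly `z_0` true, and all other worlds make no variable true. -/
def gwVal {n m : ℕ} : GWBase n m → ℕ → Prop
  | .central, p => p = 1 ∨ p = 2
  | .z1 j k, p => (k.1 = 0 ∧ p = 1) ∨ (k.1 = j.1 + 1 ∧ p = 0)
  | .z2 i k, p => (k.1 = 0 ∧ p = 2) ∨ (k.1 = i.1 + 1 ∧ p = 0)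

/-- The group of worlds representing the truth assignment `α` to `x_1, …, x_n`
(containing a z1-chain of length `j` exactly when `α x_j = 1`), together with
z2-chains of lengths `1, …, m`. -/
def groupModel2 (n m : ℕ) (α : ℕ → Bool) : EpiModel (Fin 2) where
  World := {u : GWBase n m // ∀ (j : Fin n) (k : Fin (j.1+2)), u = GWBase.z1 j k → α (j.1+1) = true}
  rel ag u v := gwRel ag u.1 v.1
  val u p := gwVal u.1 p

/-- The central (designated) world of `groupModel2 n m α`. -/
def central2 (n m : ℕ) (α : ℕ → Bool) : (groupModel2 n m α).World :=
  ⟨.central, fun _ _ h => nomatch h⟩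

/-- The pair of formulas `(χ^a_j, χ^b_j)`. -/
def chiAB : ℕ → DForm (Fin 2) × DForm (Fin 2)
  | 0 => (.atom 0, .atom 0)
  | j+1 =>
    (khat 0 (.and (.neg (.atom 1)) (.and (.neg (.atom 2)) (chiAB j).2)),
     khat 1 (.and (.neg (.atom 1)) (.and (.neg (.atom 2)) (chiAB j).1)))

def chiA (j : ℕ) : DForm (Fin 2) := (chiAB j).1
def chiB (j : ℕ) : DForm (Fin 2) := (chiAB j).2

/-- `χ_j = z_1 ∧ ¬z_2 ∧ χ^b_j ∧ ¬χ^b_{j-1}` (for `j ≥ 1`). -/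
def chiX (j : ℕ) : DForm (Fin 2) :=
  .and (.atom 1) (.and (.neg (.atom 2)) (.and (chiB j) (.neg (chiB (j-1)))))

/-- `χ'_j = ¬z_1 ∧ z_2 ∧ χ^a_j ∧ ¬χ^a_{j-1}` (for `j ≥ 1`). -/
def chiX' (j : ℕ) : DForm (Fin 2) :=
  .and (.neg (.atom 1)) (.and (.atom 2) (.and (chiA j) (.neg (chiA (j-1)))))

/-- The event model `(E_i, e_i)` of the two-agent construction: events `f^1_i, …, f^5_i`
are `0, …, 4`; `{0,1,2}` is a `b`-clique; `1 S_a 3` and `2 S_a 4`; preconditions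
`⊤, ⊤, ⊤, ¬χ'_i, ¬χ'_i ∧ ¬χ_i`; empty postconditions; designated event `0`. -/
def twoEvt (i : ℕ) : EvtModel (Fin 2) where
  k := 4
  S ag e f := decide (e = f) ||
    (if ag = 1 then decide (e.1 ≤ 2 ∧ f.1 ≤ 2)
     else decide ((e.1 = 1 ∧ f.1 = 3) ∨ (e.1 = 3 ∧ f.1 = 1) ∨
       (e.1 = 2 ∧ f.1 = 4) ∨ (e.1 = 4 ∧ f.1 = 2)))
  pre e :=
    if e.1 ≤ 2 then dtop
    else if e.1 = 3 then .neg (chiX' i)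
    else .and (.neg (chiX' i)) (.neg (chiX i))
  post _ := []

/-- The conjunction `⋀_{1 ≤ j ≤ i} ¬K̂_b χ'_j`. -/
def negConj (i : ℕ) : DForm (Fin 2) :=
  bigAnd ((List.range i).map (fun t => .neg (khat 1 (chiX' (t+1)))))

/-- The conjunction `⋀_{i < j ≤ n} K̂_b χ'_j`. -/
def posConj (n i : ℕ) : DForm (Fin 2) :=
  bigAnd ((List.range (n-i)).map (fun t => khat 1 (chiX' (i+1+t))))

/-- The formula `z_1 ∧ z_2 ∧ ⋀_{1≤j≤i} ¬K̂_b χ'_j ∧ ⋀_{i<j≤n} K̂_b χ'_j`. -/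
def xiBody (n i : ℕ) : DForm (Fin 2) :=
  .and (.atom 1) (.and (.atom 2) (.and (negConj i) (posConj n i)))

/-- `ψ'`: the result of replacing every variable `x_i` in `ψ` by `K̂_a χ_i`. -/
def propToXi : PropForm → DForm (Fin 2)
  | .atom p => khat 0 (chiX p)
  | .neg φ => .neg (propToXi φ)
  | .and φ ψ => .and (propToXi φ) (propToXi ψ)

/-- `xiAux n ψ' m i` is the formula `ξ_i` (with `m = n + 1 - i` remaining steps). -/
def xiAux (n : ℕ) (ψ' : DForm (Fin 2)) : ℕ → ℕ → DForm (Fin 2)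
  | 0, _ => ψ'
  | m+1, i =>
    if i % 2 = 1 then khat 1 (khat 0 (.and (xiBody n i) (xiAux n ψ' m (i+1))))
    else .K 1 (.K 0 (dimp (xiBody n i) (xiAux n ψ' m (i+1))))

/-- The formula `ξ = [E_1,e_1]…[E_n,e_n]ξ_1`. -/
def xiFull (n : ℕ) (ψ : PropForm) : DForm (Fin 2) :=
  ((List.range n).map (fun j => twoEvt (j+1))).foldr (fun E acc => updSingle E 0 acc)
    (xiAux n (propToXi ψ) n 1)

/-- The initial model of the two-agent construction (z1-chains of lengths `1, …, n` for
the all-true assignment, z2-chains of lengths `1, …, n`). -/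
def twoM (n : ℕ) : EpiModel (Fin 2) := groupModel2 n n (fun _ => true)

/-- The model `M' = M ⊗ E_1 ⊗ … ⊗ E_n` of the two-agent construction. -/
def twoM' (n : ℕ) : EpiModel (Fin 2) :=
  ((List.range n).map (fun j => twoEvt (j+1))).foldl EpiModel.update (twoM n)

/-! ### The semi-private-announcement PSPACE-hardness construction. -/

/-- The semi-private announcement of `φ₁` versus `φ₂` to the agents `c` with `A c = true`:
two events with preconditions `φ₁` (designated, event `0`) and `φ₂`, empty postconditions,
related by `S_c` exactly for the agents `c` not in `A` (plus reflexive loops). -/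
def semiPrivate {Agent : Type} [DecidableEq Agent] (φ₁ φ₂ : DForm Agent) (A : Agent → Bool) :
    EvtModel Agent where
  k := 1
  S c e f := decide (e = f) || !(A c)
  pre e := if e = 0 then φ₁ else φ₂
  post _ := []

/-- The semi-private announcement `(E^1_i, f^1_i)`: `¬χ'_{i+n}` versus `¬χ'_{i+2n}`,
announced to agent `a`. -/
def spE1 (n i : ℕ) : EvtModel (Fin 2) :=
  semiPrivate (.neg (chiX' (i+n))) (.neg (chiX' (i+2*n))) (fun c => decide (c = 0))

/-- The semi-private announcement `(E^2_i, f^3_i)`: `⊤` versus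
`(¬K̂_b χ'_{i+n} ∧ z_2) → ¬χ'_i`, announced to agent `b`. -/
def spE2 (n i : ℕ) : EvtModel (Fin 2) :=
  semiPrivate dtop
    (dimp (.and (.neg (khat 1 (chiX' (i+n)))) (.atom 2)) (.neg (chiX' i)))
    (fun c => decide (c = 1))

/-- The semi-private announcement `(E^3_i, f^5_i)`: `⊤` versus
`((¬K̂_b χ'_{i+2n} ∧ z_2) → ¬χ'_i) ∧ ((¬K̂_a K̂_b χ'_{i+2n} ∧ z_1) → ¬χ_i)`,
announced to agent `b`. -/
def spE3 (n i : ℕ) : EvtModel (Fin 2) :=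
  semiPrivate dtop
    (.and (dimp (.and (.neg (khat 1 (chiX' (i+2*n)))) (.atom 2)) (.neg (chiX' i)))
      (dimp (.and (.neg (khat 0 (khat 1 (chiX' (i+2*n))))) (.atom 1)) (.neg (chiX i))))
    (fun c => decide (c = 1))

/-- The list of event models `E^1_1, E^2_1, E^3_1, …, E^1_n, E^2_n, E^3_n`. -/
def spList (n : ℕ) : List (EvtModel (Fin 2)) :=
  ((List.range n).map (fun j => [spE1 n (j+1), spE2 n (j+1), spE3 n (j+1)])).flatten

/-- `spXiAux n ψ' m i` is the formula `ξ_i` of the semi-private construction. -/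
def spXiAux (n : ℕ) (ψ' : DForm (Fin 2)) : ℕ → ℕ → DForm (Fin 2)
  | 0, _ => ψ'
  | m+1, i =>
    if i % 2 = 1 then
      khat 1 (.and (negConj i) (khat 0 (.and (xiBody n i) (spXiAux n ψ' m (i+1)))))
    else
      .K 1 (dimp (negConj i) (.K 0 (dimp (xiBody n i) (spXiAux n ψ' m (i+1)))))

/-- The formula `ξ = [E^1_1,f^1_1][E^2_1,f^3_1][E^3_1,f^5_1]…[E^3_n,f^5_n]ξ_1` of the
semi-private construction. -/
def spXiFull (n : ℕ) (ψ : PropForm) : DForm (Fin 2) :=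
  (spList n).foldr (fun E acc => updSingle E 0 acc) (spXiAux n (propToXi ψ) n 1)

/-- The initial model of the semi-private construction (z1-chains of lengths `1, …, n`
for the all-true assignment, z2-chains of lengths `1, …, 3n`). -/
def spM (n : ℕ) : EpiModel (Fin 2) := groupModel2 n (3*n) (fun _ => true)

/-- The model `M' = M ⊗ E^1_1 ⊗ E^2_1 ⊗ E^3_1 ⊗ … ⊗ E^3_n`. -/
def spM' (n : ℕ) : EpiModel (Fin 2) :=
  (spList n).foldl EpiModel.update (spM n)

theorem EpiModel.update_val_iff_of_noPost {Agent : Type} (M : EpiModel Agent)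
    {E : EvtModel Agent} (hpost : E.NoPost) (u : (M.update E).World) (p : ℕ) :
    (M.update E).val u p ↔ M.val u.1.1 p := by
  simp only [EpiModel.update, updModel, hpost u.1.2]
  rfl

/- With a single agent and S5 relations, the events `a`-accessible from `e0` form one
equivalence class, so the event component of a world `(w, e)` with `e0 ~ e` carries no
information beyond `w`: forgetting it is a bisimulation onto the worlds of `W''`. -/
theorem isBisim_update_restrict {M : EpiModel Unit} (hM : M.IsS5) {E : EvtModel Unit}
    (hE : E.IsS5) (hpost : E.NoPost) {w0 : M.World} {e0 : Fin (E.k+1)}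
    {W'' : M.World → Prop}
    (hW'' : ∀ w, W'' w ↔ (M.rel () w0 w ∧ ∃ e, E.S () e0 e = true ∧ Sat M w (E.pre e))) :
    IsBisim (M.update E) (M.restrict W'')
      (fun u v => u.1.1 = v.1 ∧ E.S () e0 u.1.2 = true) := by
  rintro ⟨⟨w, e⟩, _⟩ ⟨w', hw⟩ ⟨rfl, he⟩
  have hw0w : M.rel () w0 w := ((hW'' w).1 hw).1
  refine ⟨M.update_val_iff_of_noPost hpost _, ?forth, ?back⟩
  case forth =>
    rintro ⟨⟩ ⟨⟨v, f⟩, hvf⟩ ⟨hwv, hef⟩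
    have hf : E.S () e0 f = true := (hE ()).trans he hef
    have hv : W'' v := (hW'' v).2 ⟨(hM ()).trans hw0w hwv, f, hf, hvf⟩
    exact ⟨⟨v, hv⟩, hwv, rfl, hf⟩
  case back =>
    rintro ⟨⟩ ⟨v, hv⟩ hwv
    obtain ⟨-, f, hf, hvf⟩ := (hW'' v).1 hv
    exact ⟨⟨(v, f), hvf⟩, ⟨hwv, (hE ()).trans ((hE ()).symm he) hf⟩, rfl, hf⟩

/-- For a single-pointed S5 epistemic model `(M, w0)` over a single agent
and a single-pointed S5 event model `(E, e0)` over the single agent with empty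
postconditions such that `M, w0 ⊨ pre(e0)`: letting `W'` be the worlds `a`-accessible
from `w0`, `E'` the events `a`-accessible from `e0`, and `W''` the worlds of `W'` that
satisfy the precondition of at least one event of `E'`, the pointed model
`(M ⊗ E, (w0, e0))` is bisimilar to `(M', w0)` where `M'` is the submodel of `M`
induced by `W''`. -/
theorem statement1 (M : EpiModel Unit) (hM : M.IsS5) (w0 : M.World)
    (E : EvtModel Unit) (hE : E.IsS5) (hpost : E.NoPost)
    (e0 : Fin (E.k+1)) (h0 : Sat M w0 (E.pre e0))
    (W'' : M.World → Prop)
    (hW'' : ∀ w, W'' w ↔ (M.rel () w0 w ∧ ∃ e, E.S () e0 e = true ∧ Sat M w (E.pre e)))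
    (hw0 : W'' w0) :
    Bisimilar (M.update E) ⟨(w0, e0), h0⟩ (M.restrict W'') ⟨w0, hw0⟩ :=
  ⟨_, isBisim_update_restrict hM hE hpost hW'', rfl, (hE ()).refl e0⟩

end DELMC
end

section
/- If two single-pointed epistemic models (M,w) and (M',w') are bisimilar, then for every formula φ of the dynamic epistemic language L_DEL (including formulas containing update modalities with event models), M,w ⊨ φ if and only if M',w' ⊨ φ. -/
namespace DELMC

variable {Agent : Type}

theorem IsBisim.updModel {M N : EpiModel Agent} {Z : M.World → N.World → Prop}
    (hZ : IsBisim M N Z) (k : ℕ) (S : Agent → Fin (k+1) → Fin (k+1) → Bool)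
    {domM : M.World → Fin (k+1) → Prop} {domN : N.World → Fin (k+1) → Prop}
    (hdom : ∀ u u', Z u u' → ∀ e, domM u e ↔ domN u' e) (post : Fin (k+1) → List (ℕ × Bool)) :
    IsBisim (updModel M k S domM post) (updModel N k S domN post)
      (fun u u' => Z u.1.1 u'.1.1 ∧ u.1.2 = u'.1.2) := by
  rintro ⟨⟨x, e⟩, hx⟩ ⟨⟨y, f⟩, hy⟩ ⟨hxy, rfl : e = f⟩
  obtain ⟨hval, hforth, hback⟩ := hZ x y hxy
  refine ⟨fun p => ?_, ?_, ?_⟩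
  · show (match postEval (post e) p with | some b => b = true | none => M.val x p) ↔
      (match postEval (post e) p with | some b => b = true | none => N.val y p)
    cases postEval (post e) p with
    | some b => exact Iff.rfl
    | none => exact hval p
  · rintro a ⟨⟨x', e'⟩, hx'⟩ ⟨hxx', hee'⟩
    obtain ⟨y', hyy', hZ'⟩ := hforth a x' hxx'
    exact ⟨⟨(y', e'), (hdom x' y' hZ' e').mp hx'⟩, ⟨hyy', hee'⟩, hZ', rfl⟩
  · rintro a ⟨⟨y', e'⟩, hy'⟩ ⟨hyy', hee'⟩
    obtain ⟨x', hxx', hZ'⟩ := hback a y' hyy'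
    exact ⟨⟨(x', e'), (hdom x' y' hZ' e').mpr hy'⟩, ⟨hxx', hee'⟩, hZ', rfl⟩

theorem IsBisim.sat_iff {M N : EpiModel Agent} {Z : M.World → N.World → Prop}
    (hZ : IsBisim M N Z) {u : M.World} {u' : N.World} (huu' : Z u u') (φ : DForm Agent) :
    Sat M u φ ↔ Sat N u' φ := by
  induction φ generalizing M N Z u u' with
  | atom p => exact (hZ u u' huu').1 p
  | neg φ ih => exact not_congr (ih hZ huu')
  | and φ ψ ihφ ihψ => exact and_congr (ihφ hZ huu') (ihψ hZ huu')
  | K a φ ih =>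
    obtain ⟨-, hforth, hback⟩ := hZ u u' huu'
    constructor
    · intro hK v' hv'
      obtain ⟨v, hv, hvv'⟩ := hback a v' hv'
      exact (ih hZ hvv').mp (hK v hv)
    · intro hK v hv
      obtain ⟨v', hv', hvv'⟩ := hforth a v hv
      exact (ih hZ hvv').mpr (hK v' hv')
  | upd k S pre post des φ ihpre ih =>
    -- The induction hypothesis for the preconditions makes the two updated domains match along `Z`.
    have hpre : ∀ x x', Z x x' → ∀ e, Sat M x (pre e) ↔ Sat N x' (pre e) :=
      fun x x' hxx' e => ihpre e hZ hxx'
    have hZupd := hZ.updModel k S hpre post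
    refine forall_congr' fun e => imp_congr_right fun _ => ?_
    exact ⟨fun hM hN => (ih hZupd ⟨huu', rfl⟩).mp (hM ((hpre u u' huu' e).mpr hN)),
      fun hN hM => (ih hZupd ⟨huu', rfl⟩).mpr (hN ((hpre u u' huu' e).mp hM))⟩

/-- If two single-pointed epistemic models are bisimilar, then they
satisfy the same formulas of the dynamic epistemic language (including formulas with
update modalities). -/
theorem statement2 {Agent : Type} (M : EpiModel Agent) (w : M.World)
    (N : EpiModel Agent) (v : N.World) (h : Bisimilar M w N v) (φ : DForm Agent) :
    Sat M w φ ↔ Sat N v φ := by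
  obtain ⟨Z, hZ, hwv⟩ := h
  exact hZ.sat_iff hwv φ

end DELMC
end

section
/- Let φ be a satisfiable propositional formula over x_1,…,x_n, and let (M,w0), (E_i,e_i), (E'_i,e'_i) (for 1 ≤ i ≤ n), and χ be as in the Δ^p_2-hardness construction. Then M,w0 ⊨ χ if and only if the lexicographically maximal truth assignment satisfying φ sets x_n to true. -/
namespace DELMC

/-!
Every model reached along `χ` is one-agent and fully connected, and is determined up to
the truth of propositional and `K̂_a`-formulas by the set of assignments realized by its
`¬z`-worlds, next to the designated world which keeps making exactly `z` true. The updates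
`E_1, …, E_n` turn the single all-false assignment into all assignments over
`x_1, …, x_n`. The update `E'_i` then sets `x_i` in every remaining assignment to `1` if
one of them satisfies `x_i ∧ φ`, and to `0` otherwise: this is the greedy construction of
the lexicographically maximal satisfying assignment, and since `φ` is satisfiable some
remaining assignment always satisfies it. So at the end a single assignment is left, the
lexicographically maximal model of `φ`, and `K̂_a x_n` asks whether it sets `x_n` to true.
-/
open Function

section Semantics

variable {Agent : Type}

open scoped Classical in
noncomputable def EpiModel.valuation (M : EpiModel Agent) (u : M.World) : ℕ → Bool :=
  fun p => decide (M.val u p)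

theorem EpiModel.valuation_eq_true {M : EpiModel Agent} {u : M.World} {p : ℕ} :
    M.valuation u p = true ↔ M.val u p := by
  simp [EpiModel.valuation]

theorem sat_khat {M : EpiModel Agent} {w : M.World} {a : Agent} {φ : DForm Agent} :
    Sat M w (khat a φ) ↔ ∃ v, M.rel a w v ∧ Sat M v φ := by
  simp [khat, Sat]

theorem sat_updSingle {M : EpiModel Agent} {w : M.World} {E : EvtModel Agent}
    {d : Fin (E.k + 1)} {φ : DForm Agent} :
    Sat M w (updSingle E d φ) ↔ ∀ h : Sat M w (E.pre d), Sat (M.update E) ⟨(w, d), h⟩ φ := by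
  simp [updSingle, Sat, EpiModel.update]

theorem sat_toDForm (M : EpiModel Agent) (u : M.World) (φ : PropForm) :
    Sat M u φ.toDForm ↔ φ.eval (M.valuation u) = true := by
  induction φ with
  | atom p => exact M.valuation_eq_true.symm
  | neg φ ih => simp [PropForm.toDForm, Sat, PropForm.eval, ih]
  | and φ χ ihφ ihχ => simp [PropForm.toDForm, Sat, PropForm.eval, ihφ, ihχ]

def applyPost (l : List (ℕ × Bool)) (α : ℕ → Bool) : ℕ → Bool :=
  fun p => (postEval l p).getD (α p)

@[simp]
theorem applyPost_nil (α : ℕ → Bool) : applyPost [] α = α := rfl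

@[simp]
theorem applyPost_singleton (i : ℕ) (b : Bool) (α : ℕ → Bool) :
    applyPost [(i, b)] α = update α i b := by
  funext p
  by_cases h : p = i
  · subst h; simp [applyPost, postEval]
  · simp [applyPost, postEval, h, Ne.symm h]

theorem valuation_update (M : EpiModel Agent) (E : EvtModel Agent) (v : (M.update E).World) :
    (M.update E).valuation v = applyPost (E.post v.1.2) (M.valuation v.1.1) := by
  funext p
  rw [Bool.eq_iff_iff, EpiModel.valuation_eq_true]
  show (match postEval (E.post v.1.2) p with
    | some b => b = true | none => M.val v.1.1 p) ↔ _
  rcases h : postEval (E.post v.1.2) p with _ | b <;>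
    simp [applyPost, h, EpiModel.valuation_eq_true]

end Semantics

theorem PropForm.eval_congr {s : Set ℕ} {ψ : PropForm} (hψ : ψ.atomsSub s)
    {α β : ℕ → Bool} (hαβ : ∀ p ∈ s, α p = β p) : ψ.eval α = ψ.eval β := by
  induction ψ with
  | atom p => exact hαβ p hψ
  | neg φ ih => simp only [PropForm.eval, ih hψ]
  | and φ χ ihφ ihχ => simp only [PropForm.eval, ihφ hψ.1, ihχ hψ.2]

def assignmentsOn (n : ℕ) : Set (ℕ → Bool) := {α | ∀ j, α j = true → j ∈ Set.Icc 1 n}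

def truncate (n : ℕ) (β : ℕ → Bool) : ℕ → Bool :=
  fun j => if j ∈ Set.Icc 1 n then β j else false

theorem truncate_mem_assignmentsOn (n : ℕ) (β : ℕ → Bool) :
    truncate n β ∈ assignmentsOn n := by
  intro j hj
  by_contra h
  simp [truncate, h] at hj

theorem truncate_of_mem {n j : ℕ} (β : ℕ → Bool) (hj : j ∈ Set.Icc 1 n) :
    truncate n β j = β j :=
  if_pos hj

theorem eval_truncate {n : ℕ} {ψ : PropForm} (hψ : ψ.atomsSub (Set.Icc 1 n))
    (β : ℕ → Bool) :
    ψ.eval (truncate n β) = ψ.eval β :=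
  PropForm.eval_congr hψ fun _ hp => truncate_of_mem β hp

theorem IsLexMaxSat.eq_of_mem_Icc {n : ℕ} {ψ : PropForm} {α β : ℕ → Bool}
    (hα : IsLexMaxSat n ψ α) (hβ : IsLexMaxSat n ψ β) :
    ∀ j ∈ Set.Icc 1 n, α j = β j := by
  intro j
  induction j using Nat.strong_induction_on with
  | _ j ih =>
    intro hj
    have hagree (k : ℕ) (h1k : 1 ≤ k) (hkj : k < j) : α k = β k :=
      ih k hkj ⟨h1k, by have := hj.2; omega⟩
    cases hαj : α j <;> cases hβj : β j
    · rfl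
    · exact absurd ⟨j, hj.1, hj.2, hβj, hαj, fun k h1k hkj => (hagree k h1k hkj).symm⟩
        (hα.2 β hβ.1)
    · exact absurd ⟨j, hj.1, hj.2, hαj, hβj, hagree⟩ (hβ.2 α hα.1)
    · rfl

section Represents

/-- The invariant along `χ` (`z` is variable `0`): `s` is the set of assignments realized by
the `¬z`-worlds, and the `z`-worlds, the designated `w` among them, make only `z` true. -/
structure Represents (M : EpiModel Unit) (w : M.World) (s : Set (ℕ → Bool)) : Prop where
  rel_full : ∀ u v, M.rel () u v
  val_w : M.val w 0
  z_only : ∀ u, M.val u 0 → ∀ p, M.val u p → p = 0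
  image_eq : M.valuation '' {u | ¬ M.val u 0} = s

variable {M : EpiModel Unit} {w : M.World} {s : Set (ℕ → Bool)}

theorem Represents.valuation_of_val_zero (h : Represents M w s) {u : M.World}
    (hu : M.val u 0) : M.valuation u = fun p => decide (p = 0) := by
  funext p
  rw [Bool.eq_iff_iff, EpiModel.valuation_eq_true, decide_eq_true_iff]
  exact ⟨h.z_only u hu p, fun hp => hp ▸ hu⟩

theorem Represents.mem_of_not_val_zero (h : Represents M w s) {u : M.World}
    (hu : ¬ M.val u 0) : M.valuation u ∈ s :=
  h.image_eq ▸ Set.mem_image_of_mem _ hu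

theorem Represents.sat_khat_toDForm (h : Represents M w s) (u : M.World) {φ : PropForm}
    (hφ : φ.eval (fun p => decide (p = 0)) = false) :
    Sat M u (khat () φ.toDForm) ↔ ∃ α ∈ s, φ.eval α = true := by
  simp only [sat_khat, sat_toDForm, h.rel_full u, true_and]
  constructor
  · rintro ⟨v, hv⟩
    by_cases hz : M.val v 0
    · rw [h.valuation_of_val_zero hz, hφ] at hv
      exact absurd hv Bool.false_ne_true
    · exact ⟨_, h.mem_of_not_val_zero hz, hv⟩
  · rintro ⟨α, hα, hφα⟩
    rw [← h.image_eq] at hα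
    obtain ⟨v, -, rfl⟩ := hα
    exact ⟨v, hφα⟩

theorem Represents.update (h : Represents M w s) {E : EvtModel Unit}
    (hS : ∀ e f, E.S () e f = true)
    (hpre0 : E.pre 0 = .atom 0) (hpost0 : E.post 0 = [])
    (hpre : ∀ e ≠ 0, ∀ u, Sat M u (E.pre e) → ¬ M.val u 0)
    (hpost : ∀ e α, applyPost (E.post e) α 0 = α 0) :
    ∃ h0 : Sat M w (E.pre 0), Represents (M.update E) ⟨(w, 0), h0⟩
      {β | ∃ u e, e ≠ 0 ∧ Sat M u (E.pre e) ∧ applyPost (E.post e) (M.valuation u) = β} := by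
  have hval0 (v : (M.update E).World) : (M.update E).val v 0 ↔ M.val v.1.1 0 := by
    rw [← EpiModel.valuation_eq_true, valuation_update, hpost, EpiModel.valuation_eq_true]
  have hz : ∀ v : (M.update E).World, (M.update E).val v 0 ↔ v.1.2 = 0 := by
    intro v
    rw [hval0]
    refine ⟨fun hz => by_contra fun he => hpre _ he _ v.2 hz, fun he => ?_⟩
    have hv := v.2
    rw [he, hpre0] at hv
    exact hv
  refine ⟨by rw [hpre0]; exact h.val_w, fun u v => ⟨h.rel_full _ _, hS _ _⟩, (hz _).mpr rfl,
    fun v hv p hp => ?_, ?_⟩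
  · rw [← EpiModel.valuation_eq_true, valuation_update, (hz v).mp hv, hpost0, applyPost_nil,
      EpiModel.valuation_eq_true] at hp
    exact h.z_only _ ((hval0 v).mp hv) p hp
  · ext β
    constructor
    · rintro ⟨⟨⟨u, e⟩, hu⟩, hv, rfl⟩
      exact ⟨u, e, fun he => hv ((hz _).mpr he), hu,
        (valuation_update M E ⟨(u, e), hu⟩).symm⟩
    · rintro ⟨u, e, he, hu, rfl⟩
      exact ⟨⟨(u, e), hu⟩, fun hv => he ((hz _).mp hv),
        valuation_update M E ⟨(u, e), hu⟩⟩

end Represents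

def UpdateActs (E : EvtModel Unit) (f : Set (ℕ → Bool) → Set (ℕ → Bool)) : Prop :=
  ∀ (M : EpiModel Unit) w s, Represents M w s →
    ∃ h : Sat M w (E.pre 0), Represents (M.update E) ⟨(w, 0), h⟩ (f s)

theorem sat_foldr_updSingle_iff {E : ℕ → EvtModel Unit}
    {f : ℕ → Set (ℕ → Bool) → Set (ℕ → Bool)} (hE : ∀ j, UpdateActs (E j) (f j))
    {inner : DForm Unit} {P : Set (ℕ → Bool) → Prop}
    (hinner : ∀ (M : EpiModel Unit) w s, Represents M w s → (Sat M w inner ↔ P s))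
    (l : List ℕ) {M : EpiModel Unit} {w : M.World} {s : Set (ℕ → Bool)}
    (h : Represents M w s) :
    Sat M w ((l.map E).foldr (fun E acc => updSingle E 0 acc) inner) ↔
      P (l.foldl (fun s j => f j s) s) := by
  induction l generalizing M w s with
  | nil => exact hinner M w s h
  | cons j l ih =>
    obtain ⟨h0, h'⟩ := hE j M w s h
    simp only [List.map_cons, List.foldr_cons, List.foldl_cons]
    rw [sat_updSingle, forall_prop_of_true h0]
    exact ih h'

theorem represents_deltaM : Represents deltaM deltaW0 {fun _ => false} where
  rel_full _ _ := trivial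
  val_w := ⟨rfl, rfl⟩
  z_only _ hu _ hp := hp.2
  image_eq := by
    ext α
    simp only [Set.mem_image, Set.mem_singleton_iff]
    constructor
    · rintro ⟨u, hu, rfl⟩
      funext p
      rw [Bool.eq_false_iff, ne_eq, EpiModel.valuation_eq_true]
      exact fun hp => hu ⟨hp.1, rfl⟩
    · rintro rfl
      refine ⟨(1 : Fin 2), fun hu => absurd hu.1 (by decide), funext fun p => ?_⟩
      exact Bool.eq_false_iff.mpr fun hp => absurd (EpiModel.valuation_eq_true.mp hp).1 (by decide)

def addTrue (i : ℕ) (s : Set (ℕ → Bool)) : Set (ℕ → Bool) :=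
  s ∪ (fun α => update α i true) '' s

theorem updateActs_deltaE (i : ℕ) : UpdateActs (deltaE (i + 1)) (addTrue (i + 1)) := by
  intro M w s h
  obtain ⟨h0, h'⟩ := h.update (E := deltaE (i + 1)) (fun _ _ => rfl) rfl rfl
    (fun e he u hu => by
      dsimp only [deltaE] at hu
      split_ifs at hu with he0
      exacts [absurd he0 he, hu])
    (fun e α => by dsimp only [deltaE]; split_ifs <;> simp)
  refine ⟨h0, ?_⟩
  convert h' using 1
  ext β
  constructor
  · rintro (hβ | ⟨α, hα, rfl⟩)
    · obtain ⟨u, hu, rfl⟩ := h.image_eq ▸ hβ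
      exact ⟨u, 2, (by decide : (2 : Fin 3) ≠ 0), hu, rfl⟩
    · obtain ⟨u, hu, rfl⟩ := h.image_eq ▸ hα
      exact ⟨u, 1, (by decide : (1 : Fin 3) ≠ 0), hu, applyPost_singleton ..⟩
  · rintro ⟨u, e, he, hu, rfl⟩
    fin_cases e
    · exact absurd rfl he
    · exact Or.inr ⟨_, h.mem_of_not_val_zero hu, by simp [deltaE]⟩
    · exact Or.inl (by simpa [deltaE] using h.mem_of_not_val_zero hu)

def SatTrueAt (ψ : PropForm) (s : Set (ℕ → Bool)) (i : ℕ) : Prop :=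
  ∃ α ∈ s, α i = true ∧ ψ.eval α = true

open scoped Classical in
def greedyStep (ψ : PropForm) (i : ℕ) (s : Set (ℕ → Bool)) : Set (ℕ → Bool) :=
  (fun α => update α i (decide (SatTrueAt ψ s i))) '' s

theorem updateActs_deltaE' (ψ : PropForm) (i : ℕ) :
    UpdateActs (deltaE' (i + 1) ψ) (greedyStep ψ (i + 1)) := by
  intro M w s h
  obtain ⟨h0, h'⟩ := h.update (E := deltaE' (i + 1) ψ) (fun _ _ => rfl) rfl rfl
    (fun e he u hu => by
      dsimp only [deltaE'] at hu
      split_ifs at hu with he0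
      exacts [absurd he0 he, hu.1, hu.1])
    (fun e α => by dsimp only [deltaE']; split_ifs <;> simp)
  refine ⟨h0, ?_⟩
  convert h' using 1
  have hK (u : M.World) :
      Sat M u (khat () (.and (.atom (i + 1)) ψ.toDForm)) ↔ SatTrueAt ψ s (i + 1) := by
    exact (h.sat_khat_toDForm u (φ := .and (.atom (i + 1)) ψ) (by simp [PropForm.eval])).trans
      (by simp [PropForm.eval, SatTrueAt])
  ext β
  constructor
  · rintro ⟨α, hα, rfl⟩
    obtain ⟨u, hu, rfl⟩ := h.image_eq ▸ hα
    by_cases hk : SatTrueAt ψ s (i + 1)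
    · exact ⟨u, 1, (by decide : (1 : Fin 3) ≠ 0), ⟨hu, (hK u).mpr hk⟩,
        (applyPost_singleton ..).trans (by simp [hk])⟩
    · exact ⟨u, 2, (by decide : (2 : Fin 3) ≠ 0), ⟨hu, mt (hK u).mp hk⟩,
        (applyPost_singleton ..).trans (by simp [hk])⟩
  · rintro ⟨u, e, he, hu, rfl⟩
    fin_cases e
    · exact absurd rfl he
    · exact ⟨_, h.mem_of_not_val_zero hu.1, by simp [deltaE', (hK u).mp hu.2]⟩
    · exact ⟨_, h.mem_of_not_val_zero hu.1, by simp [deltaE', mt (hK u).mpr hu.2]⟩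

theorem foldl_addTrue (n : ℕ) :
    (List.range n).foldl (fun s j => addTrue (j + 1) s) {fun _ => false} = assignmentsOn n := by
  induction n with
  | zero =>
    ext α
    simp only [List.range_zero, List.foldl_nil, Set.mem_singleton_iff, assignmentsOn,
      Set.mem_ofPred_eq, Set.mem_Icc]
    refine ⟨fun h j hj => by simp [h] at hj, fun h => funext fun j => ?_⟩
    exact Bool.eq_false_iff.mpr fun hj => absurd (h j hj) (by omega)
  | succ n ih =>
    rw [List.range_succ, List.foldl_append, ih, List.foldl_cons, List.foldl_nil]
    ext α
    simp only [addTrue, assignmentsOn, Set.mem_union, Set.mem_image, Set.mem_ofPred_eq,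
      Set.mem_Icc]
    constructor
    · rintro (hα | ⟨β, hβ, rfl⟩) j hj
      · exact ⟨(hα j hj).1, (hα j hj).2.trans n.le_succ⟩
      · by_cases hjn : j = n + 1
        · omega
        · rw [update_of_ne hjn] at hj
          exact ⟨(hβ j hj).1, (hβ j hj).2.trans n.le_succ⟩
    · intro hα
      by_cases hn : α (n + 1) = true
      · refine Or.inr ⟨update α (n + 1) false, fun j hj => ?_,
          by rw [update_idem, ← hn, update_eq_self]⟩
        by_cases hjn : j = n + 1
        · simp [hjn] at hj
        · rw [update_of_ne hjn] at hj
          have := hα j hj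
          omega
      · refine Or.inl fun j hj => ?_
        have := hα j hj
        have : j ≠ n + 1 := fun h => hn (h ▸ hj)
        omega

def greedySet (ψ : PropForm) (n i : ℕ) : Set (ℕ → Bool) :=
  (List.range i).foldl (fun s j => greedyStep ψ (j + 1) s) (assignmentsOn n)

theorem greedySet_succ (ψ : PropForm) (n i : ℕ) :
    greedySet ψ n (i + 1) = greedyStep ψ (i + 1) (greedySet ψ n i) := by
  simp [greedySet, List.range_succ]

theorem sat_deltaChi_iff {n : ℕ} (hn : 1 ≤ n) (ψ : PropForm) :
    Sat deltaM deltaW0 (deltaChi n ψ) ↔ ∃ α ∈ greedySet ψ n n, α n = true := by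
  have hinner (M : EpiModel Unit) w s (h : Represents M w s) :
      Sat M w (khat () (.atom n)) ↔ ∃ α ∈ s, α n = true :=
    h.sat_khat_toDForm w (φ := .atom n) (by simp [PropForm.eval]; omega)
  rw [greedySet, ← foldl_addTrue n]
  exact sat_foldr_updSingle_iff updateActs_deltaE
    (fun M w s h => sat_foldr_updSingle_iff (updateActs_deltaE' ψ) hinner _ h) _
    represents_deltaM

section Greedy

variable {ψ : PropForm} {n : ℕ}

open scoped Classical in
theorem mem_greedySet {i : ℕ} (hi : i ≤ n) {α : ℕ → Bool} :
    α ∈ greedySet ψ n i ↔ α ∈ assignmentsOn n ∧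
      ∀ j < i, α (j + 1) = decide (SatTrueAt ψ (greedySet ψ n j) (j + 1)) := by
  induction i generalizing α with
  | zero => simp [greedySet]
  | succ i ih =>
    rw [greedySet_succ, greedyStep]
    simp only [Set.mem_image]
    constructor
    · rintro ⟨β, hβ, rfl⟩
      obtain ⟨hβn, hβbits⟩ := (ih (by omega)).mp hβ
      refine ⟨fun j hj => ?_, fun j hj => ?_⟩
      · by_cases hji : j = i + 1
        · exact ⟨by omega, by omega⟩
        · rw [update_of_ne hji] at hj
          exact hβn j hj
      · by_cases hji : j = i
        · subst hji
          rw [update_self]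
        · rw [update_of_ne (by omega)]
          exact hβbits j (by omega)
    · rintro ⟨hαn, hαbits⟩
      refine ⟨α, (ih (by omega)).mpr ⟨hαn, fun j hj => hαbits j (by omega)⟩, ?_⟩
      exact (congrArg (update α (i + 1)) (hαbits i (by omega)).symm).trans (update_eq_self _ _)

theorem eq_of_mem_greedySet {α γ : ℕ → Bool} (hα : α ∈ greedySet ψ n n)
    (hγ : γ ∈ greedySet ψ n n) {j : ℕ} (hj : j ∈ Set.Icc 1 n) : α j = γ j := by
  obtain ⟨k, rfl⟩ : ∃ k, j = k + 1 := ⟨j - 1, by have := hj.1; omega⟩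
  rw [((mem_greedySet le_rfl).mp hα).2 k (by have := hj.2; omega),
    ((mem_greedySet le_rfl).mp hγ).2 k (by have := hj.2; omega)]

theorem exists_eval_mem_greedySet (hψ : ψ.atomsSub (Set.Icc 1 n))
    (hsat : ∃ α, ψ.eval α = true) (i : ℕ) : ∃ α ∈ greedySet ψ n i, ψ.eval α = true := by
  induction i with
  | zero =>
    obtain ⟨β, hβ⟩ := hsat
    exact ⟨truncate n β, truncate_mem_assignmentsOn n β, (eval_truncate hψ β).trans hβ⟩
  | succ i ih =>
    rw [greedySet_succ]
    by_cases hk : SatTrueAt ψ (greedySet ψ n i) (i + 1)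
    · obtain ⟨α, hα, hαi, hαψ⟩ := id hk
      exact ⟨α, ⟨α, hα, update_eq_self_iff.mpr (by simp [hk, hαi])⟩, hαψ⟩
    · obtain ⟨α, hα, hαψ⟩ := ih
      have hαi : α (i + 1) = false := Bool.eq_false_iff.mpr fun h => hk ⟨α, hα, h, hαψ⟩
      exact ⟨α, ⟨α, hα, update_eq_self_iff.mpr (by simp [hk, hαi])⟩, hαψ⟩

theorem isLexMaxSat_of_mem_greedySet (hψ : ψ.atomsSub (Set.Icc 1 n)) {γ : ℕ → Bool}
    (hγ : γ ∈ greedySet ψ n n) (hγψ : ψ.eval γ = true) : IsLexMaxSat n ψ γ := by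
  refine ⟨hγψ, ?_⟩
  rintro β hβψ ⟨i, h1i, hin, hβi, hγi, hagree⟩
  obtain ⟨k, rfl⟩ : ∃ k, i = k + 1 := ⟨i - 1, by omega⟩
  have hγbits := ((mem_greedySet le_rfl).mp hγ).2
  have hβ' : truncate n β ∈ greedySet ψ n k := by
    refine (mem_greedySet (by omega)).mpr ⟨truncate_mem_assignmentsOn n β, fun j hj => ?_⟩
    rw [truncate_of_mem β ⟨by omega, by omega⟩, hagree (j + 1) (by omega) (by omega)]
    exact hγbits j (by omega)
  have hk : SatTrueAt ψ (greedySet ψ n k) (k + 1) :=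
    ⟨truncate n β, hβ', by rw [truncate_of_mem β ⟨h1i, hin⟩, hβi],
      (eval_truncate hψ β).trans hβψ⟩
  rw [hγbits k (by omega)] at hγi
  simp [hk] at hγi

end Greedy

/-- In the Δ₂ᵖ-hardness construction, for every satisfiable
propositional formula `ψ` over `x_1, …, x_n`: `M, w0 ⊨ χ` if and only if the
lexicographically maximal assignment satisfying `ψ` sets `x_n` to true. -/
theorem statement4 (n : ℕ) (hn : 1 ≤ n) (ψ : PropForm)
    (hvars : ψ.atomsSub (Set.Icc 1 n)) (hsat : ∃ α, ψ.eval α = true) :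
    Sat deltaM deltaW0 (deltaChi n ψ) ↔ ∀ α, IsLexMaxSat n ψ α → α n = true := by
  rw [sat_deltaChi_iff hn]
  obtain ⟨γ, hγ, hγψ⟩ := exists_eval_mem_greedySet hvars hsat n
  have hγmax := isLexMaxSat_of_mem_greedySet hvars hγ hγψ
  have hnI : n ∈ Set.Icc 1 n := ⟨hn, le_rfl⟩
  constructor
  · rintro ⟨α, hα, hαn⟩ β hβ
    rw [hβ.eq_of_mem_Icc hγmax n hnI, ← eq_of_mem_greedySet hα hγ hnI, hαn]
  · exact fun h => ⟨γ, hγ, h γ hγmax⟩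

end DELMC
end

section
/- In the Δ^p_2-hardness construction, the model (M',w') = (M,w0) ⊗ (E_1,e_1) ⊗ … ⊗ (E_n,e_n) consists of the designated world w' (which makes z true and all of x_1,…,x_n false) and, for each truth assignment α to x_1,…,x_n, exactly one world that makes z false and whose valuation on x_1,…,x_n agrees with α; moreover all worlds of M' are mutually a-related. -/
namespace DELMC

/-!
Each update `⊗ E_i` keeps the `z`-world (only the event with precondition `z` applies to it)
and splits every `¬z`-world into two copies, one where the postcondition sets `x_i` and one
where it does not. Since `x_i` was false everywhere before, the copies realise both values of
`x_i`; by induction on `n` the `¬z`-worlds of `M'` correspond exactly to the assignments.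
-/

theorem EpiModel.update_val_of_postEval_eq_none {Agent : Type} {M : EpiModel Agent}
    {E : EvtModel Agent} {u : (M.update E).World} {p : ℕ}
    (h : postEval (E.post u.1.2) p = none) : (M.update E).val u p ↔ M.val u.1.1 p := by
  change (match postEval (E.post u.1.2) p with
    | some b => b = true
    | none => M.val u.1.1 p) ↔ _
  rw [h]

theorem EpiModel.update_val_of_postEval_eq_some {Agent : Type} {M : EpiModel Agent}
    {E : EvtModel Agent} {u : (M.update E).World} {p : ℕ} {b : Bool}
    (h : postEval (E.post u.1.2) p = some b) : (M.update E).val u p ↔ b = true := by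
  change (match postEval (E.post u.1.2) p with
    | some b => b = true
    | none => M.val u.1.1 p) ↔ _
  rw [h]

theorem postEval_singleton_self (i : ℕ) (b : Bool) : postEval [(i, b)] i = some b := by
  simp [postEval]

theorem postEval_singleton_of_ne {i p : ℕ} (h : p ≠ i) (b : Bool) :
    postEval [(i, b)] p = none := by
  simp [postEval, List.find?, beq_eq_false_iff_ne.mpr (Ne.symm h)]

section UpdateDeltaE

variable {M : EpiModel Unit} {i : ℕ}

theorem update_deltaE_val (u : (M.update (deltaE i)).World) (p : ℕ) :
    (M.update (deltaE i)).val u p ↔ (u.1.2 = 1 ∧ p = i) ∨ M.val u.1.1 p := by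
  by_cases he : u.1.2 = 1
  · have hpost : (deltaE i).post u.1.2 = [(i, true)] := if_pos he
    by_cases hp : p = i
    · subst hp
      simp [EpiModel.update_val_of_postEval_eq_some (hpost ▸ postEval_singleton_self p true), he]
    · have hnone := hpost ▸ postEval_singleton_of_ne hp true
      simp [EpiModel.update_val_of_postEval_eq_none hnone, hp]
  · have hpost : (deltaE i).post u.1.2 = [] := if_neg he
    simp [EpiModel.update_val_of_postEval_eq_none (by rw [hpost]; rfl), he]

theorem update_deltaE_event_eq_zero_iff (u : (M.update (deltaE i)).World) :
    u.1.2 = 0 ↔ M.val u.1.1 0 := by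
  have hpre : Sat M u.1.1 (if u.1.2 = 0 then .atom 0 else .neg (.atom 0)) := u.2
  by_cases he : u.1.2 = 0
  · rw [if_pos he] at hpre
    exact iff_of_true he hpre
  · rw [if_neg he] at hpre
    exact iff_of_false he hpre

theorem update_deltaE_val_zero (hi : i ≠ 0) (u : (M.update (deltaE i)).World) :
    (M.update (deltaE i)).val u 0 ↔ M.val u.1.1 0 := by
  simp [update_deltaE_val, Ne.symm hi]

def updateDeltaEWorld (w : M.World) (e : Fin 3) (he : e = 0 ↔ M.val w 0) :
    (M.update (deltaE i)).World :=
  ⟨(w, e), show Sat M w (if e = 0 then .atom 0 else .neg (.atom 0)) by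
    by_cases h : e = 0
    · rw [if_pos h]; exact he.mp h
    · rw [if_neg h]; exact mt he.mpr h⟩

end UpdateDeltaE

structure EnumeratesAssignments (M : EpiModel Unit) (n : ℕ) : Prop where
  rel_total : ∀ u v : M.World, M.rel () u v
  existsUnique_val_zero : ∃! w : M.World, M.val w 0
  val_iff_of_val_zero : ∀ w : M.World, M.val w 0 → ∀ p, M.val w p ↔ p = 0
  not_val_of_lt : ∀ v : M.World, ¬ M.val v 0 → ∀ p, n < p → ¬ M.val v p
  existsUnique_assignment : ∀ α : ℕ → Bool, ∃! v : M.World,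
    ¬ M.val v 0 ∧ ∀ i, 1 ≤ i → i ≤ n → (M.val v i ↔ α i = true)

theorem enumeratesAssignments_deltaM : EnumeratesAssignments deltaM 0 where
  rel_total _ _ := trivial
  existsUnique_val_zero := ⟨deltaW0, ⟨rfl, rfl⟩, fun _ hw => hw.1⟩
  val_iff_of_val_zero := by
    rintro w ⟨rfl, -⟩ p
    exact ⟨And.right, fun hp => ⟨rfl, hp⟩⟩
  not_val_of_lt _ hv p _ hp := hv ⟨hp.1, rfl⟩
  existsUnique_assignment _ := by
    refine ⟨(1 : Fin 2), ⟨fun h => absurd h.1 (by decide), fun i h1 h0 => by omega⟩, ?_⟩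
    rintro (v : Fin 2) ⟨hv, -⟩
    fin_cases v
    · exact absurd ⟨rfl, rfl⟩ hv
    · rfl

theorem EnumeratesAssignments.update_deltaE_val_iff {M : EpiModel Unit} {n : ℕ}
    (hM : EnumeratesAssignments M n) (u : (M.update (deltaE (n + 1))).World)
    (hu : ¬ M.val u.1.1 0) (α : ℕ → Bool) :
    (∀ i, 1 ≤ i → i ≤ n + 1 → ((M.update (deltaE (n + 1))).val u i ↔ α i = true)) ↔
      (∀ i, 1 ≤ i → i ≤ n → (M.val u.1.1 i ↔ α i = true)) ∧
        (u.1.2 = 1 ↔ α (n + 1) = true) := by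
  have hlast : (M.update (deltaE (n + 1))).val u (n + 1) ↔ u.1.2 = 1 := by
    simp [update_deltaE_val, hM.not_val_of_lt _ hu (n + 1) (Nat.lt_succ_self n)]
  have hlow : ∀ i, i ≤ n → ((M.update (deltaE (n + 1))).val u i ↔ M.val u.1.1 i) := by
    intro i hi
    simp [update_deltaE_val, show i ≠ n + 1 by omega]
  constructor
  · intro h
    exact ⟨fun i h1 hi => (hlow i hi).symm.trans (h i h1 (by omega)),
      hlast.symm.trans (h (n + 1) (by omega) le_rfl)⟩
  · rintro ⟨hα, hαlast⟩ i h1 hi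
    rcases Nat.lt_or_eq_of_le hi with hi | rfl
    · exact (hlow i (by omega)).trans (hα i h1 (by omega))
    · exact hlast.trans hαlast

theorem EnumeratesAssignments.existsUnique_assignment_update_deltaE {M : EpiModel Unit} {n : ℕ}
    (hM : EnumeratesAssignments M n) (α : ℕ → Bool) :
    ∃! v : (M.update (deltaE (n + 1))).World, ¬ (M.update (deltaE (n + 1))).val v 0 ∧
      ∀ i, 1 ≤ i → i ≤ n + 1 → ((M.update (deltaE (n + 1))).val v i ↔ α i = true) := by
  have hval0 := update_deltaE_val_zero (M := M) (Nat.add_one_ne_zero n)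
  obtain ⟨v, ⟨hv, hvα⟩, hv_unique⟩ := hM.existsUnique_assignment α
  have hevent : ∀ e : Fin 3, e ≠ 0 → ((e = 1 ↔ α (n + 1) = true) ↔
      e = bif α (n + 1) then 1 else 2) := by
    intro e he
    fin_cases e <;> cases α (n + 1) <;> simp_all
  have hne : (bif α (n + 1) then 1 else 2 : Fin 3) ≠ 0 := by cases α (n + 1) <;> decide
  refine ⟨updateDeltaEWorld v _ (iff_of_false hne hv), ?_, ?_⟩
  · refine ⟨(hval0 _).not.mpr hv, (hM.update_deltaE_val_iff _ hv α).mpr ⟨hvα, ?_⟩⟩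
    exact (hevent _ hne).mpr rfl
  · rintro u ⟨hu, huα⟩
    rw [hval0] at hu
    obtain ⟨hα, hαlast⟩ := (hM.update_deltaE_val_iff u hu α).mp huα
    have he : u.1.2 ≠ 0 := mt (update_deltaE_event_eq_zero_iff u).mp hu
    exact Subtype.ext (Prod.ext (hv_unique _ ⟨hu, hα⟩) ((hevent _ he).mp hαlast))

theorem EnumeratesAssignments.update_deltaE {M : EpiModel Unit} {n : ℕ}
    (hM : EnumeratesAssignments M n) :
    EnumeratesAssignments (M.update (deltaE (n + 1))) (n + 1) := by
  have hval0 := update_deltaE_val_zero (M := M) (Nat.add_one_ne_zero n)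
  have hzworld : ∀ u : (M.update (deltaE (n + 1))).World, M.val u.1.1 0 →
      ∀ p, (M.update (deltaE (n + 1))).val u p ↔ M.val u.1.1 p := by
    intro u hu p
    have he : u.1.2 ≠ 1 := by
      rw [(update_deltaE_event_eq_zero_iff u).mpr hu]; exact (by decide : (0 : Fin 3) ≠ 1)
    simp [update_deltaE_val, he]
  obtain ⟨w₀, hw₀, hw₀_unique⟩ := hM.existsUnique_val_zero
  refine ⟨fun _ _ => ⟨hM.rel_total _ _, rfl⟩, ?_, ?_, ?_, ?_⟩
  · refine ⟨updateDeltaEWorld w₀ 0 (iff_of_true rfl hw₀), (hval0 _).mpr hw₀,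
      fun u hu => ?_⟩
    dsimp only at hu
    rw [hval0] at hu
    exact Subtype.ext (Prod.ext (hw₀_unique _ hu) ((update_deltaE_event_eq_zero_iff u).mpr hu))
  · intro u hu p
    rw [hval0] at hu
    rw [hzworld u hu, hM.val_iff_of_val_zero _ hu]
  · intro u hu p hp
    rw [hval0] at hu
    rw [update_deltaE_val]
    rintro (⟨-, rfl⟩ | h)
    · omega
    · exact hM.not_val_of_lt _ hu p (by omega) h
  · exact hM.existsUnique_assignment_update_deltaE

theorem deltaM'_succ (n : ℕ) : deltaM' (n + 1) = (deltaM' n).update (deltaE (n + 1)) := by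
  simp [deltaM', List.range_succ]

theorem enumeratesAssignments_deltaM' (n : ℕ) : EnumeratesAssignments (deltaM' n) n := by
  induction n with
  | zero => exact enumeratesAssignments_deltaM
  | succ n ih => rw [deltaM'_succ]; exact ih.update_deltaE

theorem statement5_general (n : ℕ) :
    (∃! w : (deltaM' n).World, (deltaM' n).val w 0) ∧
    (∀ w : (deltaM' n).World, (deltaM' n).val w 0 →
      ∀ i, 1 ≤ i → i ≤ n → ¬ (deltaM' n).val w i) ∧
    (∀ α : ℕ → Bool, ∃! v : (deltaM' n).World,
      ¬ (deltaM' n).val v 0 ∧ ∀ i, 1 ≤ i → i ≤ n → ((deltaM' n).val v i ↔ α i = true)) ∧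
    (∀ u v : (deltaM' n).World, (deltaM' n).rel () u v) := by
  have h := enumeratesAssignments_deltaM' n
  refine ⟨h.existsUnique_val_zero, fun w hw i h1 _ => ?_, h.existsUnique_assignment,
    h.rel_total⟩
  rw [h.val_iff_of_val_zero w hw]
  omega

/-- In the Δ₂ᵖ-hardness construction, the model
`M' = M ⊗ E_1 ⊗ … ⊗ E_n` consists of the designated world (the unique world making `z`
true, which makes all of `x_1, …, x_n` false) and, for each truth assignment `α` to
`x_1, …, x_n`, exactly one world making `z` false and agreeing with `α` on
`x_1, …, x_n`; moreover all worlds are mutually `a`-related. -/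
theorem statement5 (n : ℕ) (hn : 1 ≤ n) :
    (∃! w : (deltaM' n).World, (deltaM' n).val w 0) ∧
    (∀ w : (deltaM' n).World, (deltaM' n).val w 0 →
      ∀ i, 1 ≤ i → i ≤ n → ¬ (deltaM' n).val w i) ∧
    (∀ α : ℕ → Bool, ∃! v : (deltaM' n).World,
      ¬ (deltaM' n).val v 0 ∧ ∀ i, 1 ≤ i → i ≤ n → ((deltaM' n).val v i ↔ α i = true)) ∧
    (∀ u v : (deltaM' n).World, (deltaM' n).rel () u v) :=
  statement5_general n

end DELMC
end
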